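/- arXiv:2311.01628 — 2 statements merged into one kernel-verified Lean document; each statement's English description precedes it below -/
import Mathlib

section
/- Let U ⊆ ℝⁿ be open, let q, b ∈ ℝ, let y : U → ℝ be of class C² with y > 0 on U, and let φ : U → ℝ be of class C¹. Then at every point of U: ( y^q ⟪∇y,∇φ⟫ + b y^{q−1} ‖∇y‖² φ )² = y^{2q} (⟪∇y,∇φ⟫)² + b(b−2q+1) y^{2q−2} ‖∇y‖⁴ φ² − 2b y^{2q−1} ⟪∇y, (∇²y)∇y⟫ φ² − b y^{2q−1} (Δy) ‖∇y‖² φ² + div( b y^{2q−1} ‖∇y‖² φ² ∇y ). -/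
/-- The Euclidean Laplacian of a scalar function. -/
noncomputable def lap {n : ℕ} (f : EuclideanSpace ℝ (Fin n) → ℝ)
    (x : EuclideanSpace ℝ (Fin n)) : ℝ :=
  ∑ i, fderiv ℝ (fun z => fderiv ℝ f z (EuclideanSpace.single i 1)) x (EuclideanSpace.single i 1)

/-- The Euclidean divergence of a vector field. -/
noncomputable def diverg {n : ℕ}
    (V : EuclideanSpace ℝ (Fin n) → EuclideanSpace ℝ (Fin n))
    (x : EuclideanSpace ℝ (Fin n)) : ℝ :=
  ∑ i, fderiv ℝ V x (EuclideanSpace.single i 1) i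

/-! Expanding the square leaves the divergence of `g ∇y`, `g = b y^{2q-1} ‖∇y‖² φ²`. By the
product rule it equals `⟪∇g, ∇y⟫ + g Δy`, and differentiating the three factors of `g` along `∇y`
produces exactly the cross term `2b y^{2q-1} ‖∇y‖² φ ⟪∇y,∇φ⟫`, the Hessian term, and the
`(2q-1)` part of the coefficient `b(b-2q+1)`; the rest is the arithmetic `y^{a+c} = y^a y^c`. -/

open InnerProductSpace

section Hessian

variable {𝕜 E F : Type*} [NontriviallyNormedField 𝕜] [NormedAddCommGroup E] [NormedSpace 𝕜 E]
  [NormedAddCommGroup F] [NormedSpace 𝕜 F] {f : E → F} {x : E}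

theorem ContDiffAt.differentiableAt_fderiv (h : ContDiffAt 𝕜 2 f x) :
    DifferentiableAt 𝕜 (fderiv 𝕜 f) x :=
  (h.fderiv_right (m := 1) le_rfl).differentiableAt one_ne_zero

theorem fderiv_fderiv_apply_const (h : DifferentiableAt 𝕜 (fderiv 𝕜 f) x) (u v : E) :
    fderiv 𝕜 (fun z => fderiv 𝕜 f z v) x u = fderiv 𝕜 (fderiv 𝕜 f) x u v := by
  simp [fderiv_clm_apply h (differentiableAt_const v)]

end Hessian

section Gradient

variable {F : Type*} [NormedAddCommGroup F] [InnerProductSpace ℝ F] [CompleteSpace F]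
  {f : F → ℝ} {x : F}

-- Over `ℝ` the Riesz isomorphism is linear, so `gradient f = (toDual ℝ F).symm ∘ fderiv ℝ f`
-- is differentiable wherever `fderiv ℝ f` is.
theorem HasFDerivAt.gradient {H : F →L[ℝ] StrongDual ℝ F} (h : HasFDerivAt (fderiv ℝ f) H x) :
    HasFDerivAt (gradient f)
      ((toDual ℝ F).symm.toContinuousLinearEquiv.toContinuousLinearMap ∘L H) x :=
  (toDual ℝ F).symm.toContinuousLinearEquiv.toContinuousLinearMap.hasFDerivAt.comp x h

theorem DifferentiableAt.gradient (h : DifferentiableAt ℝ (fderiv ℝ f) x) :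
    DifferentiableAt ℝ (gradient f) x :=
  h.hasFDerivAt.gradient.differentiableAt

theorem inner_fderiv_gradient_left (h : DifferentiableAt ℝ (fderiv ℝ f) x) (u v : F) :
    inner ℝ (fderiv ℝ (gradient f) x u) v = fderiv ℝ (fderiv ℝ f) x u v := by
  rw [h.hasFDerivAt.gradient.fderiv]
  exact toDual_symm_apply

end Gradient

section Divergence

variable {n : ℕ} {x : EuclideanSpace ℝ (Fin n)}

theorem diverg_smul {g : EuclideanSpace ℝ (Fin n) → ℝ}
    {V : EuclideanSpace ℝ (Fin n) → EuclideanSpace ℝ (Fin n)}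
    (hg : DifferentiableAt ℝ g x) (hV : DifferentiableAt ℝ V x) :
    diverg (fun z => g z • V z) x = fderiv ℝ g x (V x) + g x * diverg V x := by
  have hsum : ∑ i, fderiv ℝ g x (EuclideanSpace.single i 1) * V x i = fderiv ℝ g x (V x) := by
    conv_rhs => rw [← (EuclideanSpace.basisFun (Fin n) ℝ).sum_repr (V x)]
    simp [mul_comm]
  simp only [diverg, fderiv_fun_smul hg hV, add_apply,
    smul_apply, ContinuousLinearMap.smulRight_apply, PiLp.add_apply,
    PiLp.smul_apply, smul_eq_mul, Finset.sum_add_distrib, ← Finset.mul_sum, hsum]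
  ring

theorem diverg_gradient {f : EuclideanSpace ℝ (Fin n) → ℝ}
    (h : DifferentiableAt ℝ (fderiv ℝ f) x) : diverg (gradient f) x = lap f x := by
  refine Finset.sum_congr rfl fun i _ => ?_
  rw [fderiv_fderiv_apply_const h, ← inner_fderiv_gradient_left h,
    EuclideanSpace.inner_single_right]
  simp

theorem diverg_hardyField {y φ : EuclideanSpace ℝ (Fin n) → ℝ} {q b : ℝ}
    (hy : ContDiffAt ℝ 2 y x) (hyx : y x ≠ 0) (hφ : DifferentiableAt ℝ φ x) :
    diverg (fun z => (b * y z ^ (2 * q - 1) * ‖gradient y z‖ ^ 2 * φ z ^ 2) • gradient y z) x =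
      b * (2 * q - 1) * y x ^ (2 * q - 2) * ‖gradient y x‖ ^ 4 * φ x ^ 2
      + 2 * b * y x ^ (2 * q - 1) * fderiv ℝ (fderiv ℝ y) x (gradient y x) (gradient y x) * φ x ^ 2
      + 2 * b * y x ^ (2 * q - 1) * ‖gradient y x‖ ^ 2 * φ x * inner ℝ (gradient y x) (gradient φ x)
      + b * y x ^ (2 * q - 1) * ‖gradient y x‖ ^ 2 * φ x ^ 2 * lap y x := by
  have hyd : DifferentiableAt ℝ y x := hy.differentiableAt two_ne_zero
  have hHess : DifferentiableAt ℝ (fderiv ℝ y) x := hy.differentiableAt_fderiv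
  have hcoef : HasFDerivAt (fun z => b * y z ^ (2 * q - 1) * ‖gradient y z‖ ^ 2 * φ z ^ 2) _ x :=
    ((((hyd.hasFDerivAt.rpow_const (p := 2 * q - 1) (Or.inl hyx)).const_mul b).mul
      hHess.gradient.hasFDerivAt.norm_sq).mul (hφ.hasFDerivAt.pow 2))
  rw [diverg_smul hcoef.differentiableAt hHess.gradient, diverg_gradient hHess, hcoef.fderiv]
  have hHG : inner ℝ (gradient y x) (fderiv ℝ (gradient y) x (gradient y x)) =
      fderiv ℝ (fderiv ℝ y) x (gradient y x) (gradient y x) := by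
    rw [real_inner_comm, inner_fderiv_gradient_left hHess]
  have hyG : fderiv ℝ y x (gradient y x) = ‖gradient y x‖ ^ 2 := by
    rw [← inner_gradient_left, real_inner_self_eq_norm_sq]
  have hφG : fderiv ℝ φ x (gradient y x) = inner ℝ (gradient y x) (gradient φ x) := by
    rw [← inner_gradient_left, real_inner_comm]
  have hpow : y x ^ (2 * q - 1 - 1) = y x ^ (2 * q - 2) := by ring_nf
  simp only [Pi.mul_apply, nsmul_eq_mul, Nat.cast_ofNat, add_apply, smul_apply,
    smul_eq_mul, ContinuousLinearMap.comp_apply, coe_innerSL_apply, hHG, hyG, hφG, hpow]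
  ring

end Divergence

/-- The completed-square divergence identity proving the pointwise Hardy inequality
(Proposition 2.8): at every point of `U`,
`(y^q ⟪∇y,∇φ⟫ + b y^{q-1} ‖∇y‖² φ)² = y^{2q} (⟪∇y,∇φ⟫)²
  + b(b-2q+1) y^{2q-2} ‖∇y‖⁴ φ² - 2b y^{2q-1} ⟪∇y,(∇²y)∇y⟫ φ²
  - b y^{2q-1} (Δy) ‖∇y‖² φ² + div(b y^{2q-1} ‖∇y‖² φ² ∇y)`. -/
theorem stmt_8 (n : ℕ) (U : Set (EuclideanSpace ℝ (Fin n))) (hU : IsOpen U)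
    (q b : ℝ) (y φ : EuclideanSpace ℝ (Fin n) → ℝ)
    (hy : ContDiffOn ℝ 2 y U) (hypos : ∀ x ∈ U, 0 < y x)
    (hφ : ContDiffOn ℝ 1 φ U) :
    ∀ x ∈ U,
      ((y x) ^ (q:ℝ) * (inner ℝ (gradient y x) (gradient φ x) : ℝ)
          + b * (y x) ^ (q - 1) * ‖gradient y x‖^2 * φ x)^2 =
        (y x) ^ (2*q) * (inner ℝ (gradient y x) (gradient φ x) : ℝ)^2
        + b * (b - 2*q + 1) * (y x) ^ (2*q - 2) * ‖gradient y x‖^4 * (φ x)^2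
        - 2 * b * (y x) ^ (2*q - 1) *
            (fderiv ℝ (fun z => fderiv ℝ y z (gradient y x)) x (gradient y x)) * (φ x)^2
        - b * (y x) ^ (2*q - 1) * lap y x * ‖gradient y x‖^2 * (φ x)^2
        + diverg (fun z =>
            (b * (y z) ^ (2*q - 1) * ‖gradient y z‖^2 * (φ z)^2) • gradient y z) x := by
  intro x hx
  have hyx : ContDiffAt ℝ 2 y x := hy.contDiffAt (hU.mem_nhds hx)
  have hY : 0 < y x := hypos x hx
  have hφx : DifferentiableAt ℝ φ x := (hφ.contDiffAt (hU.mem_nhds hx)).differentiableAt one_ne_zero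
  have hsplit (a c : ℝ) : y x ^ (a + c) = y x ^ a * y x ^ c := Real.rpow_add hY a c
  rw [diverg_hardyField hyx hY.ne' hφx, fderiv_fderiv_apply_const hyx.differentiableAt_fderiv,
    show 2 * q - 2 = (q - 1) + (q - 1) by ring, show 2 * q - 1 = q + (q - 1) by ring,
    show 2 * q = q + q by ring, hsplit, hsplit, hsplit]
  ring
end

section
/- Let U ⊆ ℝ × ℝⁿ be open, let f, u : U → ℝ be twice continuously differentiable, let λ ∈ ℝ, and set v := e^{−λf} u. Then at every point of U: e^{−λf} ( ∂_t u + Δu ) = ∂_t v + Δv + 2λ ⟪∇f, ∇v⟫ + λ ( ∂_t f + Δf + λ ‖∇f‖² ) v, where ∇ and Δ act only in the ℝⁿ (spatial) variables. -/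
open Topology Real

section Conjugation

variable {E : Type*} [NormedAddCommGroup E] [NormedSpace ℝ E] {F G : E → ℝ} {lam : ℝ}

theorem fderiv_exp_neg_mul_mul_apply {z : E} (hF : DifferentiableAt ℝ F z)
    (hG : DifferentiableAt ℝ G z) (y : E) :
    fderiv ℝ (fun w => exp (-(lam * F w)) * G w) z y =
      exp (-(lam * F z)) * (fderiv ℝ G z y - lam * G z * fderiv ℝ F z y) := by
  rw [((hF.hasFDerivAt.const_mul lam).fun_neg.exp.fun_mul hG.hasFDerivAt).fderiv]
  simp only [smul_neg, add_apply, smul_apply, smul_eq_mul, neg_apply]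
  ring

theorem deriv_exp_neg_mul_mul {g h : ℝ → ℝ} {t : ℝ} (hg : DifferentiableAt ℝ g t)
    (hh : DifferentiableAt ℝ h t) :
    deriv (fun s => exp (-(lam * g s)) * h s) t =
      exp (-(lam * g t)) * (deriv h t - lam * h t * deriv g t) := by
  simp only [← fderiv_apply_one_eq_deriv]
  exact fderiv_exp_neg_mul_mul_apply hg hh 1

theorem ContDiffAt.differentiableAt_fderiv_apply {x : E} (hF : ContDiffAt ℝ 2 F x) (e : E) :
    DifferentiableAt ℝ (fun z => fderiv ℝ F z e) x :=
  ((hF.fderiv_right (m := 1) (by norm_num)).differentiableAt (by norm_num)).clm_apply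
    (differentiableAt_const e)

theorem fderiv_fderiv_exp_neg_mul_mul_apply {x : E} (hF : ContDiffAt ℝ 2 F x)
    (hG : ContDiffAt ℝ 2 G x) (e : E) :
    fderiv ℝ (fun z => fderiv ℝ (fun w => exp (-(lam * F w)) * G w) z e) x e =
      exp (-(lam * F x)) * (fderiv ℝ (fun z => fderiv ℝ G z e) x e
        - lam * (G x * fderiv ℝ (fun z => fderiv ℝ F z e) x e
          + 2 * fderiv ℝ F x e * fderiv ℝ G x e)
        + lam ^ 2 * G x * fderiv ℝ F x e ^ 2) := by
  have hfirst : (fun z => fderiv ℝ (fun w => exp (-(lam * F w)) * G w) z e) =ᶠ[𝓝 x]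
      fun z => exp (-(lam * F z)) * (fderiv ℝ G z e - lam * G z * fderiv ℝ F z e) := by
    filter_upwards [hF.eventually (by simp), hG.eventually (by simp)] with z hFz hGz
    exact fderiv_exp_neg_mul_mul_apply (hFz.differentiableAt (by norm_num))
      (hGz.differentiableAt (by norm_num)) e
  have hF₁ := hF.differentiableAt (by norm_num)
  have hG₁ := hG.differentiableAt (by norm_num)
  have hinner := (hG.differentiableAt_fderiv_apply e).hasFDerivAt.fun_sub
    ((hG₁.hasFDerivAt.const_mul lam).fun_mul (hF.differentiableAt_fderiv_apply e).hasFDerivAt)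
  rw [hfirst.fderiv_eq, fderiv_exp_neg_mul_mul_apply hF₁ hinner.differentiableAt, hinner.fderiv]
  simp only [sub_apply, add_apply, smul_apply, smul_eq_mul]
  ring

end Conjugation

theorem inner_gradient_exp_neg_mul_mul {E : Type*} [NormedAddCommGroup E] [InnerProductSpace ℝ E]
    [CompleteSpace E] {F G : E → ℝ} {lam : ℝ} {x : E} (hF : DifferentiableAt ℝ F x)
    (hG : DifferentiableAt ℝ G x) :
    inner ℝ (gradient F x) (gradient (fun w => exp (-(lam * F w)) * G w) x) =
      exp (-(lam * F x)) *
        (inner ℝ (gradient F x) (gradient G x) - lam * G x * ‖gradient F x‖ ^ 2) := by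
  rw [inner_gradient_right, inner_gradient_right, ← real_inner_self_eq_norm_sq,
    inner_gradient_left, fderiv_exp_neg_mul_mul_apply hF hG]
  simp only [conj_trivial]

theorem ContDiffAt.uncurry_slices {E : Type*} [NormedAddCommGroup E] [NormedSpace ℝ E]
    {φ : ℝ → E → ℝ} {k : WithTop ℕ∞} {t : ℝ} {x : E}
    (h : ContDiffAt ℝ k (fun q : ℝ × E => φ q.1 q.2) (t, x)) :
    ContDiffAt ℝ k (fun s => φ s x) t ∧ ContDiffAt ℝ k (φ t) x :=
  ⟨h.comp t (contDiffAt_id.prodMk contDiffAt_const),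
    h.comp x (contDiffAt_const.prodMk contDiffAt_id)⟩

section Euclidean

variable {n : ℕ}

theorem inner_gradient_eq_sum (F G : EuclideanSpace ℝ (Fin n) → ℝ)
    (x : EuclideanSpace ℝ (Fin n)) :
    inner ℝ (gradient F x) (gradient G x) =
      ∑ i, fderiv ℝ F x (EuclideanSpace.single i 1) *
        fderiv ℝ G x (EuclideanSpace.single i 1) := by
  rw [← (EuclideanSpace.basisFun (Fin n) ℝ).sum_inner_mul_inner]
  simp [inner_gradient_left, inner_gradient_right]

theorem lap_exp_neg_mul_mul {F G : EuclideanSpace ℝ (Fin n) → ℝ} {lam : ℝ}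
    {x : EuclideanSpace ℝ (Fin n)} (hF : ContDiffAt ℝ 2 F x) (hG : ContDiffAt ℝ 2 G x) :
    lap (fun w => exp (-(lam * F w)) * G w) x =
      exp (-(lam * F x)) * (lap G x - lam * G x * lap F x
        - 2 * lam * inner ℝ (gradient F x) (gradient G x)
        + lam ^ 2 * G x * ‖gradient F x‖ ^ 2) := by
  rw [← real_inner_self_eq_norm_sq, inner_gradient_eq_sum, inner_gradient_eq_sum, lap, lap, lap]
  simp only [fderiv_fderiv_exp_neg_mul_mul_apply hF hG, Finset.mul_sum, ← Finset.sum_sub_distrib,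
    ← Finset.sum_add_distrib]
  refine Finset.sum_congr rfl fun i _ => ?_
  ring

end Euclidean

/-- The Carleman conjugation identity (equation (3.12)): if `v := e^{-λf} u`, then at every
point of the open set `U ⊆ ℝ × ℝⁿ`,
`e^{-λf}(∂ₜu + Δu) = ∂ₜv + Δv + 2λ⟪∇f, ∇v⟫ + λ(∂ₜf + Δf + λ‖∇f‖²) v`,
where `∇` and `Δ` act only in the spatial variables. -/
theorem stmt_11 (n : ℕ) (U : Set (ℝ × EuclideanSpace ℝ (Fin n))) (hU : IsOpen U)
    (f u : ℝ → EuclideanSpace ℝ (Fin n) → ℝ)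
    (hf : ContDiffOn ℝ 2 (fun q : ℝ × EuclideanSpace ℝ (Fin n) => f q.1 q.2) U)
    (hu : ContDiffOn ℝ 2 (fun q : ℝ × EuclideanSpace ℝ (Fin n) => u q.1 q.2) U)
    (lam : ℝ)
    (v : ℝ → EuclideanSpace ℝ (Fin n) → ℝ)
    (hv : ∀ t x, v t x = Real.exp (-(lam * f t x)) * u t x) :
    ∀ t x, (t, x) ∈ U →
      Real.exp (-(lam * f t x)) * (deriv (fun s => u s x) t + lap (u t) x) =
        deriv (fun s => v s x) t + lap (v t) x
          + 2 * lam * (inner ℝ (gradient (f t) x) (gradient (v t) x) : ℝ)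
          + lam * (deriv (fun s => f s x) t + lap (f t) x
              + lam * ‖gradient (f t) x‖^2) * v t x := by
  intro t x hx
  obtain ⟨hf_time, hf_space⟩ := (hf.contDiffAt (hU.mem_nhds hx)).uncurry_slices
  obtain ⟨hu_time, hu_space⟩ := (hu.contDiffAt (hU.mem_nhds hx)).uncurry_slices
  have hv_time : (fun s => v s x) = fun s => exp (-(lam * f s x)) * u s x := funext (hv · x)
  have hv_space : v t = fun w => exp (-(lam * f t w)) * u t w := funext (hv t)
  rw [hv t x, hv_time, hv_space,
    deriv_exp_neg_mul_mul (hf_time.differentiableAt (by norm_num))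
      (hu_time.differentiableAt (by norm_num)),
    lap_exp_neg_mul_mul hf_space hu_space,
    inner_gradient_exp_neg_mul_mul (hf_space.differentiableAt (by norm_num))
      (hu_space.differentiableAt (by norm_num))]
  ring
end
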